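/- For p ∈ OFS with |p| > 1, f(R(p)) ≥ p_1. -/

import Mathlib

/-- `OFS p`: `p` is a strictly increasing nonempty finite sequence of positive integers. -/
def OFS (p : List ℕ) : Prop := p ≠ [] ∧ p.Pairwise (· < ·) ∧ ∀ x ∈ p, 0 < x

/-- The reduction operation `R`. -/
def R : List ℕ → List ℕ
  | [] => []
  | [a] => [a]
  | a :: b :: rest => (((b :: rest).map (fun x => x - a)).insert a).mergeSort (· ≤ ·)

/-- `max(p)` -/
def maxL (p : List ℕ) : ℕ := p.foldr max 0

/-- `gcd(p)` -/
def gcdL (p : List ℕ) : ℕ := p.foldr Nat.gcd 0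

/-- Fuel-based auxiliary for `f`; `maxL p + 1` fuel always suffices since
`maxL` strictly decreases under `R` for lists of length `> 1`. -/
def faux : ℕ → List ℕ → ℕ
  | _, [] => 0
  | _, [a] => a
  | 0, _ => 0
  | fuel+1, p => p.headI + faux fuel (R p)

/-- The function `f` of Castelli–Mignosi–Restivo: `f p = p₁` if `|p| = 1`,
and `f p = p₁ + f (R p)` otherwise. -/
def f (p : List ℕ) : ℕ := faux (maxL p + 1) p

/-- The function `fw` of Tijdeman–Zamboni. -/
def fw (p : List ℕ) : ℕ :=
  if h : 1 < p.length ∧ gcdL p.dropLast = gcdL p ∧ f p.dropLast ≤ maxL p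
  then fw p.dropLast
  else f p
termination_by p.length
decreasing_by
  simp only [List.length_dropLast]
  omega

/-- The Fine–Wilf graph `G(p,k)` on vertex set `{1,…,k}` (represented by `Fin k`,
with `v : Fin k` standing for the integer `v+1`); `i` and `j` are adjacent iff
`|i - j|` is an entry of `p`. -/
def G (p : List ℕ) (k : ℕ) : SimpleGraph (Fin k) where
  Adj i j := i ≠ j ∧ (((j : ℕ) - (i : ℕ)) ∈ p ∨ ((i : ℕ) - (j : ℕ)) ∈ p)
  symm := by
    constructor
    intro i j h
    exact ⟨h.1.symm, h.2.symm⟩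
  loopless := by
    constructor
    intro i h
    exact h.1 rfl

/-- `p` is trim. -/
def Trim (p : List ℕ) : Prop :=
  p.length = 1 ∨ (1 < p.length ∧
    (gcdL p ≠ gcdL p.dropLast ∨ (gcdL p = gcdL p.dropLast ∧ maxL p < f p.dropLast)))

lemma le_maxL {l : List ℕ} {x : ℕ} (hx : x ∈ l) : x ≤ maxL l := by
  induction l with
  | nil => simp at hx
  | cons a t ih =>
    rcases List.mem_cons.1 hx with rfl | h
    · exact le_max_left _ _
    · exact (ih h).trans (le_max_right _ _)

lemma maxL_le {l : List ℕ} {c : ℕ} (h : ∀ x ∈ l, x ≤ c) : maxL l ≤ c := by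
  induction l with
  | nil => exact Nat.zero_le _
  | cons a t ih =>
    exact max_le (h a (List.mem_cons_self)) (ih fun x hx => h x (List.mem_cons_of_mem _ hx))

lemma mem_R_iff {a b : ℕ} {rest : List ℕ} {x : ℕ} :
    x ∈ R (a :: b :: rest) ↔ x = a ∨ ∃ y ∈ b :: rest, x = y - a := by
  rw [R, (List.mergeSort_perm _ _).mem_iff, List.mem_insert_iff, List.mem_map]
  constructor
  · rintro (rfl | ⟨y, hy, rfl⟩)
    · exact Or.inl rfl
    · exact Or.inr ⟨y, hy, rfl⟩
  · rintro (rfl | ⟨y, hy, rfl⟩)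
    · exact Or.inl rfl
    · exact Or.inr ⟨y, hy, rfl⟩

lemma OFS_R {a b : ℕ} {rest : List ℕ} (hp : OFS (a :: b :: rest)) :
    OFS (R (a :: b :: rest)) := by
  obtain ⟨-, hs, hpos⟩ := hp
  have ha : ∀ y ∈ b :: rest, a < y := (List.pairwise_cons.1 hs).1
  have htail : (b :: rest).Pairwise (· < ·) := (List.pairwise_cons.1 hs).2
  refine ⟨?_, ?_, ?_⟩
  · intro h
    have : a ∈ R (a :: b :: rest) := mem_R_iff.2 (Or.inl rfl)
    simp [h] at this
  · have hnd0 : (b :: rest).Nodup := htail.nodup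
    have hndm : ((b :: rest).map (fun x => x - a)).Nodup := by
      refine hnd0.map_on ?_
      intro x hxm y hym hxy
      have := ha x hxm; have := ha y hym; omega
    have hnd : (((b :: rest).map (fun x => x - a)).insert a).Nodup := hndm.insert
    have hndM : (R (a :: b :: rest)).Nodup := by
      rw [R]; exact ((List.mergeSort_perm _ _).nodup_iff).2 hnd
    have hsle : (R (a :: b :: rest)).Pairwise (· ≤ ·) := by
      rw [R]; exact List.pairwise_mergeSort' _ _
    exact (hsle.and hndM).imp fun h => lt_of_le_of_ne h.1 h.2
  · intro x hx
    rcases mem_R_iff.1 hx with rfl | ⟨y, hy, rfl⟩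
    · exact hpos _ (List.mem_cons_self)
    · have := ha y hy
      omega

lemma maxL_R_lt {a b : ℕ} {rest : List ℕ} (hp : OFS (a :: b :: rest)) :
    maxL (R (a :: b :: rest)) < maxL (a :: b :: rest) := by
  obtain ⟨-, hs, hpos⟩ := hp
  have ha : ∀ y ∈ b :: rest, a < y := (List.pairwise_cons.1 hs).1
  have hb : b ≤ maxL (a :: b :: rest) := le_maxL (by simp)
  have hab : a < b := ha b (by simp)
  have ha1 : 0 < a := hpos a (List.mem_cons_self)
  have : maxL (R (a :: b :: rest)) ≤ maxL (a :: b :: rest) - 1 := by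
    refine maxL_le ?_
    intro x hx
    rcases mem_R_iff.1 hx with rfl | ⟨y, hy, rfl⟩
    · omega
    · have h1 := ha y hy
      have h2 : y ≤ maxL (a :: b :: rest) := le_maxL (List.mem_cons_of_mem _ hy)
      omega
  omega

lemma faux_ge (n : ℕ) : ∀ q : List ℕ, OFS q → maxL q < n → ∀ x ∈ q, x ≤ faux n q := by
  induction n with
  | zero => intro q _ h x hx; have := le_maxL hx; omega
  | succ n ih =>
    rintro (_ | ⟨a, (_ | ⟨b, rest⟩)⟩) hq hlt x hx
    · simp at hx
    · simp at hx; simp [faux, hx]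
    · have hfx : faux (n+1) (a :: b :: rest) = a + faux n (R (a :: b :: rest)) := rfl
      have hR : OFS (R (a :: b :: rest)) := OFS_R hq
      have hmax : maxL (R (a :: b :: rest)) < n := by
        have := maxL_R_lt hq; omega
      have ha : ∀ y ∈ b :: rest, a < y := (List.pairwise_cons.1 hq.2.1).1
      rcases List.mem_cons.1 hx with rfl | h
      · omega
      · have hmem : x - a ∈ R (a :: b :: rest) := mem_R_iff.2 (Or.inr ⟨x, h, rfl⟩)
        have := ih _ hR hmax _ hmem
        have := ha x h
        omega

theorem f_R_ge_head (p : List ℕ) (hp : OFS p) (hl : 1 < p.length) :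
    p.headI ≤ f (R p) := by
  rcases p with _ | ⟨a, _ | ⟨b, rest⟩⟩
  · simp at hl
  · simp at hl
  · have hR : OFS (R (a :: b :: rest)) := OFS_R hp
    have hmem : a ∈ R (a :: b :: rest) := mem_R_iff.2 (Or.inl rfl)
    exact faux_ge _ _ hR (Nat.lt_succ_self _) _ hmem
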